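/- For g = (a,b,c,r,v) ∈ G̃ define the linear map A(g) : ℝ⁵ → ℝ⁵ by A(g)(α₁,α₂,α₃,ρ,μ) = (α₁+bα₃−cμ, α₂−aα₃−(r+a²/2)μ, α₃+aμ, ρ+bμ, μ) (the coadjoint action of G̃). Then: (i) A((0,0,0,0,0)) = id and A(g₁⋆g₂) = A(g₁)∘A(g₂) for all g₁,g₂ ∈ G̃, so A is an action of G̃ by linear automorphisms of ℝ⁵; (ii) the last coordinate μ is invariant under the action; (iii) for every μ ≠ 0 and every (α₁,α₂,α₃,ρ), the orbit of (α₁,α₂,α₃,ρ,μ) is exactly {(β₁,β₂,β₃,σ,μ) : β₁,β₂,β₃,σ ∈ ℝ} (a four-dimensional orbit); (iv) for every α₃ ≠ 0 and ρ ∈ ℝ, the orbit of (0,0,α₃,ρ,0) is exactly {(β₁,β₂,α₃,ρ,0) : β₁,β₂ ∈ ℝ} (a two-dimensional orbit); (v) every point of the form (α₁,α₂,0,ρ,0) is a fixed point of the action. -/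

import Mathlib

noncomputable section

/-- The underlying set `ℝ⁵` of the group `G̃`. -/
abbrev G5 : Type := ℝ × ℝ × ℝ × ℝ × ℝ

/-- Multiplication on `G̃`. -/
def gtmul (g₁ g₂ : G5) : G5 :=
  (g₁.1 + g₂.1, g₁.2.1 + g₂.2.1, g₁.2.2.1 + g₂.2.2.1 - g₁.2.1 * g₂.1,
   g₁.2.2.2.1 + g₂.2.2.2.1,
   g₁.2.2.2.2 + g₂.2.2.2.2 + g₁.2.2.1 * g₂.1 - (1 / 2) * g₁.2.1 * g₂.1 ^ 2
     + g₁.2.2.2.1 * g₂.2.1)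

/-- The coadjoint action: for `g = (a,b,c,r,v)`,
`A(g)(α₁,α₂,α₃,ρ,μ) = (α₁+bα₃−cμ, α₂−aα₃−(r+a²/2)μ, α₃+aμ, ρ+bμ, μ)`. -/
def Acoad (g : G5) (α : G5) : G5 :=
  (α.1 + g.2.1 * α.2.2.1 - g.2.2.1 * α.2.2.2.2,
   α.2.1 - g.1 * α.2.2.1 - (g.2.2.2.1 + g.1 ^ 2 / 2) * α.2.2.2.2,
   α.2.2.1 + g.1 * α.2.2.2.2,
   α.2.2.2.1 + g.2.1 * α.2.2.2.2,
   α.2.2.2.2)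

theorem Acoad_zero (α : G5) : Acoad 0 α = α := by
  simp [Acoad]

theorem Acoad_gtmul (g₁ g₂ α : G5) : Acoad (gtmul g₁ g₂) α = Acoad g₁ (Acoad g₂ α) := by
  simp only [Acoad, gtmul, Prod.mk.injEq]
  refine ⟨by ring, by ring, by ring, by ring, trivial⟩

theorem isLinearMap_Acoad (g : G5) : IsLinearMap ℝ (Acoad g) where
  map_add x y := by
    simp only [Acoad, Prod.fst_add, Prod.snd_add, Prod.mk_add_mk, Prod.mk.injEq]
    refine ⟨by ring, by ring, by ring, by ring, trivial⟩
  map_smul t x := by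
    simp only [Acoad, Prod.smul_fst, Prod.smul_snd, Prod.smul_mk, smul_eq_mul, Prod.mk.injEq]
    refine ⟨by ring, by ring, by ring, by ring, trivial⟩

theorem Acoad_last (g α : G5) : (Acoad g α).2.2.2.2 = α.2.2.2.2 := rfl

theorem Acoad_of_last_eq_zero (g : G5) (α₁ α₂ α₃ ρ : ℝ) :
    Acoad g (α₁, α₂, α₃, ρ, 0) = (α₁ + g.2.1 * α₃, α₂ - g.1 * α₃, α₃, ρ, 0) := by
  simp [Acoad]

def coadOrbit (α : G5) : Set G5 := {w | ∃ g : G5, w = Acoad g α}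

theorem coadOrbit_of_last_ne_zero {μ : ℝ} (hμ : μ ≠ 0) (α₁ α₂ α₃ ρ : ℝ) :
    coadOrbit (α₁, α₂, α₃, ρ, μ) = {w | ∃ β₁ β₂ β₃ σ : ℝ, w = (β₁, β₂, β₃, σ, μ)} := by
  ext w
  constructor
  · rintro ⟨g, rfl⟩
    exact ⟨_, _, _, _, rfl⟩
  · rintro ⟨β₁, β₂, β₃, σ, rfl⟩
    -- solve the triangular system for `a`, `b`, then `c`, then `r`
    set a := (β₃ - α₃) / μ
    set b := (σ - ρ) / μ
    refine ⟨(a, b, (α₁ + b * α₃ - β₁) / μ, (α₂ - a * α₃ - β₂) / μ - a ^ 2 / 2, 0), ?_⟩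
    simp only [Acoad, Prod.mk.injEq, a, b]
    refine ⟨?_, ?_, ?_, ?_, trivial⟩ <;> field_simp <;> ring

theorem coadOrbit_of_last_eq_zero {α₃ : ℝ} (hα₃ : α₃ ≠ 0) (α₁ α₂ ρ : ℝ) :
    coadOrbit (α₁, α₂, α₃, ρ, 0) = {w | ∃ β₁ β₂ : ℝ, w = (β₁, β₂, α₃, ρ, 0)} := by
  ext w
  constructor
  · rintro ⟨g, rfl⟩
    exact ⟨_, _, Acoad_of_last_eq_zero g α₁ α₂ α₃ ρ⟩
  · rintro ⟨β₁, β₂, rfl⟩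
    refine ⟨((α₂ - β₂) / α₃, (β₁ - α₁) / α₃, 0, 0, 0), ?_⟩
    rw [Acoad_of_last_eq_zero]
    simp only [Prod.mk.injEq, and_true]
    constructor <;> field_simp <;> ring

/-- The coadjoint action of `G̃`: it is an action by linear automorphisms,
preserves `μ`, has the displayed 4- and 2-dimensional orbits, and fixes the
points `(α₁,α₂,0,ρ,0)`. -/
theorem stmt10 :
    -- (i) A is an action by linear maps
    (∀ α : G5, Acoad ((0 : ℝ), (0 : ℝ), (0 : ℝ), (0 : ℝ), (0 : ℝ)) α = α) ∧
    (∀ g₁ g₂ : G5, ∀ α : G5, Acoad (gtmul g₁ g₂) α = Acoad g₁ (Acoad g₂ α)) ∧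
    (∀ g : G5, IsLinearMap ℝ (Acoad g)) ∧
    -- (ii) the last coordinate μ is invariant
    (∀ g α : G5, (Acoad g α).2.2.2.2 = α.2.2.2.2) ∧
    -- (iii) four-dimensional orbits for μ ≠ 0
    (∀ μ : ℝ, μ ≠ 0 → ∀ α1 α2 α3 ρ : ℝ,
      {w : G5 | ∃ g : G5, w = Acoad g (α1, α2, α3, ρ, μ)} =
        {w : G5 | ∃ β1 β2 β3 σ : ℝ, w = (β1, β2, β3, σ, μ)}) ∧
    -- (iv) two-dimensional orbits for μ = 0, α₃ ≠ 0
    (∀ α3 : ℝ, α3 ≠ 0 → ∀ ρ : ℝ,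
      {w : G5 | ∃ g : G5, w = Acoad g ((0 : ℝ), (0 : ℝ), α3, ρ, (0 : ℝ))} =
        {w : G5 | ∃ β1 β2 : ℝ, w = (β1, β2, α3, ρ, (0 : ℝ))}) ∧
    -- (v) fixed points
    (∀ α1 α2 ρ : ℝ, ∀ g : G5,
      Acoad g (α1, α2, (0 : ℝ), ρ, (0 : ℝ)) = (α1, α2, (0 : ℝ), ρ, (0 : ℝ))) :=
  ⟨Acoad_zero, Acoad_gtmul, isLinearMap_Acoad, Acoad_last,
    fun _ hμ => coadOrbit_of_last_ne_zero hμ,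
    fun _ hα₃ ρ => coadOrbit_of_last_eq_zero hα₃ 0 0 ρ,
    fun α₁ α₂ ρ g => by simpa using Acoad_of_last_eq_zero g α₁ α₂ 0 ρ⟩

end
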